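/- Let A = B ⊕ V be a ℤ/2-graded K-algebra with even part B and odd part V, and let τ be the parity involution of A. Suppose there exist odd elements φ₁, φ₂ ∈ V and a nonzero scalar c ∈ K such that φ₁φ₂ − φ₂φ₁ = c·1 in A. Then the extension B ⊆ A is O(ℤ/2)-Hopf-Galois for the ℤ/2-action generated by τ: the map β : A ⊗_B A → A × A, a ⊗ a′ ↦ (a · a′, a · τ(a′)), is bijective. -/

import Mathlib

open scoped TensorProduct

/-- The relative tensor product `A ⊗_B A` over the even part `B` of a graded algebra,
realized as the quotient of `A ⊗_K A` by the `K`-span of the balancing relators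
`(a·b) ⊗ a' - a ⊗ (b·a')` for `b ∈ B`. -/
noncomputable abbrev grTensorA (K A : Type) [Field K] [Ring A] [Algebra K A]
    (B : Submodule K A) : Type :=
  (TensorProduct K A A) ⧸ (Submodule.span K {x : TensorProduct K A A |
    ∃ (a a' b : A) (_ : b ∈ B), x = (a * b) ⊗ₜ[K] a' - a ⊗ₜ[K] (b * a')})

/-!
Rescaling `φ₂` to `ψ = c⁻¹ φ₂` gives odd elements with `φ₁ ψ - ψ φ₁ = 1`. The map `β` is
well defined because `τ` is left `B`-linear, and it has the explicit inverse
`(x, y) ↦ ½ ((x + y) ⊗ 1 + (x - y) φ₁ ⊗ ψ - (x - y) ψ ⊗ φ₁)`. On `a ⊗ p` with `p` even only the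
first term survives and gives `a p ⊗ 1 = a ⊗ p`; on `a ⊗ q` with `q` odd only the commutator
term survives, and since `q φ₁` and `q ψ` are even it equals `a ⊗ q (φ₁ ψ - ψ φ₁) = a ⊗ q`.
-/

namespace grTensorA

variable {K A : Type} [Field K] [Ring A] [Algebra K A] (B : Submodule K A)

abbrev tmul (a a' : A) : grTensorA K A B :=
  Submodule.Quotient.mk (a ⊗ₜ[K] a')

def tmulOne : A →ₗ[K] grTensorA K A B :=
  Submodule.mkQ _ ∘ₗ (TensorProduct.mk K A A).flip 1

def tmulCommutator (φ ψ : A) : A →ₗ[K] grTensorA K A B :=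
  Submodule.mkQ _ ∘ₗ ((TensorProduct.mk K A A).flip ψ ∘ₗ LinearMap.mulRight K φ -
    (TensorProduct.mk K A A).flip φ ∘ₗ LinearMap.mulRight K ψ)

variable {B}

theorem tmul_def (a a' : A) : tmul B a a' = Submodule.mkQ _ (a ⊗ₜ[K] a') := rfl

theorem mul_tmul {b : A} (hb : b ∈ B) (a a' : A) : tmul B (a * b) a' = tmul B a (b * a') := by
  rw [← sub_eq_zero, tmul_def, tmul_def, ← map_sub, Submodule.mkQ_apply,
    Submodule.Quotient.mk_eq_zero]
  exact Submodule.subset_span ⟨a, a', b, hb, rfl⟩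

theorem tmul_add (a a₁ a₂ : A) : tmul B a (a₁ + a₂) = tmul B a a₁ + tmul B a a₂ := by
  simp only [tmul_def, TensorProduct.tmul_add, map_add]

theorem tmul_sub (a a₁ a₂ : A) : tmul B a (a₁ - a₂) = tmul B a a₁ - tmul B a a₂ := by
  simp only [tmul_def, TensorProduct.tmul_sub, map_sub]

theorem tmulOne_apply (x : A) : tmulOne B x = tmul B x 1 := rfl

theorem tmulCommutator_apply (φ ψ x : A) :
    tmulCommutator B φ ψ x = tmul B (x * φ) ψ - tmul B (x * ψ) φ := rfl

theorem tmulOne_mul {p : A} (hp : p ∈ B) (a : A) : tmulOne B (a * p) = tmul B a p := by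
  rw [tmulOne_apply, mul_tmul hp, mul_one]

theorem tmulCommutator_mul {φ ψ q : A} (hcomm : φ * ψ - ψ * φ = 1) (hqφ : q * φ ∈ B)
    (hqψ : q * ψ ∈ B) (a : A) : tmulCommutator B φ ψ (a * q) = tmul B a q := by
  rw [tmulCommutator_apply, mul_assoc, mul_assoc, mul_tmul hqφ, mul_tmul hqψ, ← tmul_sub,
    mul_assoc, mul_assoc, ← mul_sub, hcomm, mul_one]

variable {M : Type} [AddCommGroup M] [Module K M]

def lift (f : A →ₗ[K] A →ₗ[K] M) (hf : ∀ a a' b, b ∈ B → f (a * b) a' = f a (b * a')) :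
    grTensorA K A B →ₗ[K] M :=
  Submodule.liftQ _ (TensorProduct.lift f) <| (Submodule.span_le).2 <| by
    rintro _ ⟨a, a', b, hb, rfl⟩
    simp [hf a a' b hb]

@[ext]
theorem ext {f g : grTensorA K A B →ₗ[K] M} (h : ∀ a a', f (tmul B a a') = g (tmul B a a')) :
    f = g :=
  Submodule.linearMap_qext _ (TensorProduct.ext' h)

end grTensorA

section GaloisMap

open grTensorA

variable {K A : Type} [Field K] [Ring A] [Algebra K A] {B V : Submodule K A}

theorem map_mul_of_mem_even {τ : A →ₗ[K] A} (hsup : B ⊔ V = ⊤)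
    (hBB : ∀ b ∈ B, ∀ b' ∈ B, b * b' ∈ B) (hBV : ∀ b ∈ B, ∀ v ∈ V, b * v ∈ V)
    (hτB : ∀ b ∈ B, τ b = b) (hτV : ∀ v ∈ V, τ v = -v) :
    ∀ b ∈ B, ∀ x, τ (b * x) = b * τ x := by
  intro b hb x
  obtain ⟨p, hp, q, hq, rfl⟩ := Submodule.mem_sup.1 (hsup ▸ Submodule.mem_top : x ∈ B ⊔ V)
  rw [mul_add, map_add, map_add, hτB _ hp, hτV _ hq, hτB _ (hBB b hb p hp),
    hτV _ (hBV b hb q hq), mul_add, mul_neg]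

variable (B) in
def galoisMap (τ : A →ₗ[K] A) (hτ : ∀ b ∈ B, ∀ x, τ (b * x) = b * τ x) :
    grTensorA K A B →ₗ[K] A × A :=
  lift (LinearMap.mk₂ K (fun a a' => (a * a', a * τ a'))
      (fun _ _ _ => by simp only [add_mul, Prod.mk_add_mk])
      (fun _ _ _ => by simp only [smul_mul_assoc, Prod.smul_mk])
      (fun _ _ _ => by simp only [mul_add, map_add, Prod.mk_add_mk])
      (fun _ _ _ => by simp only [map_smul, mul_smul_comm, Prod.smul_mk]))
    (fun a a' b hb => by simp only [LinearMap.mk₂_apply, mul_assoc, hτ b hb])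

variable {τ : A →ₗ[K] A} (hτ : ∀ b ∈ B, ∀ x, τ (b * x) = b * τ x)

theorem galoisMap_tmul (a a' : A) : galoisMap B τ hτ (tmul B a a') = (a * a', a * τ a') := rfl

theorem galoisMap_tmulOne (hτ1 : τ 1 = 1) (x : A) :
    galoisMap B τ hτ (tmulOne B x) = (x, x) := by
  rw [tmulOne_apply, galoisMap_tmul, hτ1, mul_one]

theorem galoisMap_tmulCommutator {φ ψ : A} (hcomm : φ * ψ - ψ * φ = 1) (hτφ : τ φ = -φ)
    (hτψ : τ ψ = -ψ) (x : A) : galoisMap B τ hτ (tmulCommutator B φ ψ x) = (x, -x) := by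
  have hx : x * φ * ψ - x * ψ * φ = x := by rw [mul_assoc, mul_assoc, ← mul_sub, hcomm, mul_one]
  rw [tmulCommutator_apply, map_sub, galoisMap_tmul, galoisMap_tmul, hτφ, hτψ, Prod.mk_sub_mk,
    hx, mul_neg, mul_neg, sub_neg_eq_add, neg_add_eq_sub, ← neg_sub, hx]

variable (B) in
def galoisInv (φ ψ : A) : A × A →ₗ[K] grTensorA K A B :=
  (2 : K)⁻¹ • (tmulOne B ∘ₗ (LinearMap.fst K A A + LinearMap.snd K A A) +
    tmulCommutator B φ ψ ∘ₗ (LinearMap.fst K A A - LinearMap.snd K A A))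

theorem galoisInv_apply (φ ψ x y : A) : galoisInv B φ ψ (x, y) =
    (2 : K)⁻¹ • (tmulOne B (x + y) + tmulCommutator B φ ψ (x - y)) := rfl

variable [NeZero (2 : K)]

theorem galoisInv_diag (φ ψ x : A) : galoisInv B φ ψ (x, x) = tmulOne B x := by
  rw [galoisInv_apply, sub_self, map_zero, add_zero, ← two_smul K x, map_smul, smul_smul,
    inv_mul_cancel₀ two_ne_zero, one_smul]

theorem galoisInv_antidiag (φ ψ x : A) :
    galoisInv B φ ψ (x, -x) = tmulCommutator B φ ψ x := by
  rw [galoisInv_apply, add_neg_cancel, map_zero, zero_add, sub_neg_eq_add, ← two_smul K x,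
    map_smul, smul_smul, inv_mul_cancel₀ two_ne_zero, one_smul]

theorem galoisMap_comp_galoisInv {φ ψ : A} (hcomm : φ * ψ - ψ * φ = 1) (hτ1 : τ 1 = 1)
    (hτφ : τ φ = -φ) (hτψ : τ ψ = -ψ) :
    galoisMap B τ hτ ∘ₗ galoisInv B φ ψ = LinearMap.id := by
  refine LinearMap.ext fun ⟨x, y⟩ => ?_
  rw [LinearMap.comp_apply, galoisInv_apply, map_smul, map_add, galoisMap_tmulOne hτ hτ1,
    galoisMap_tmulCommutator hτ hcomm hτφ hτψ, Prod.mk_add_mk, Prod.smul_mk, LinearMap.id_apply]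
  have h2 : (2 : K) ≠ 0 := two_ne_zero
  ext
  · rw [show x + y + (x - y) = (2 : K) • x by rw [two_smul]; abel, smul_smul,
      inv_mul_cancel₀ h2, one_smul]
  · rw [show x + y + -(x - y) = (2 : K) • y by rw [two_smul]; abel, smul_smul,
      inv_mul_cancel₀ h2, one_smul]

theorem galoisInv_comp_galoisMap (hsup : B ⊔ V = ⊤) (hτB : ∀ b ∈ B, τ b = b)
    (hτV : ∀ v ∈ V, τ v = -v) {φ ψ : A} (hcomm : φ * ψ - ψ * φ = 1)
    (hVφ : ∀ q ∈ V, q * φ ∈ B) (hVψ : ∀ q ∈ V, q * ψ ∈ B) :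
    galoisInv B φ ψ ∘ₗ galoisMap B τ hτ = LinearMap.id := by
  refine grTensorA.ext fun a a' => ?_
  obtain ⟨p, hp, q, hq, rfl⟩ := Submodule.mem_sup.1 (hsup ▸ Submodule.mem_top : a' ∈ B ⊔ V)
  rw [LinearMap.comp_apply, LinearMap.id_apply, tmul_add, map_add, map_add, galoisMap_tmul,
    galoisMap_tmul, hτB p hp, hτV q hq, mul_neg, galoisInv_diag, galoisInv_antidiag,
    tmulOne_mul hp, tmulCommutator_mul hcomm (hVφ q hq) (hVψ q hq)]

theorem galoisMap_bijective (hsup : B ⊔ V = ⊤) (hone : (1 : A) ∈ B)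
    (hVV : ∀ v ∈ V, ∀ v' ∈ V, v * v' ∈ B) (hτB : ∀ b ∈ B, τ b = b) (hτV : ∀ v ∈ V, τ v = -v)
    {φ ψ : A} (hφ : φ ∈ V) (hψ : ψ ∈ V) (hcomm : φ * ψ - ψ * φ = 1) :
    Function.Bijective (galoisMap B τ hτ) :=
  Function.bijective_iff_has_inverse.2 ⟨galoisInv B φ ψ,
    LinearMap.congr_fun
      (galoisInv_comp_galoisMap hτ hsup hτB hτV hcomm (hVV · · φ hφ) (hVV · · ψ hψ)),
    LinearMap.congr_fun
      (galoisMap_comp_galoisInv hτ hcomm (hτB 1 hone) (hτV φ hφ) (hτV ψ hψ))⟩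

end GaloisMap

theorem stmt_12_general (K A : Type) [Field K] [CharZero K] [Ring A] [Algebra K A]
    (B V : Submodule K A) (hcompl : IsCompl B V) (hone : (1 : A) ∈ B)
    (hBB : ∀ b ∈ B, ∀ b' ∈ B, b * b' ∈ B) (hBV : ∀ b ∈ B, ∀ v ∈ V, b * v ∈ V)
    (hVV : ∀ v ∈ V, ∀ v' ∈ V, v * v' ∈ B)
    (τ : A →ₗ[K] A) (hτB : ∀ b ∈ B, τ b = b) (hτV : ∀ v ∈ V, τ v = -v)
    (φ₁ φ₂ : A) (hφ₁ : φ₁ ∈ V) (hφ₂ : φ₂ ∈ V) (c : K) (hc : c ≠ 0)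
    (hcomm : φ₁ * φ₂ - φ₂ * φ₁ = algebraMap K A c) :
    ∃ β : grTensorA K A B →ₗ[K] A × A,
      (∀ a a' : A, β (Submodule.Quotient.mk (a ⊗ₜ[K] a')) = (a * a', a * τ a')) ∧
      Function.Bijective β := by
  have hsup := hcompl.sup_eq_top
  have hτ := map_mul_of_mem_even hsup hBB hBV hτB hτV
  have hcomm' : φ₁ * (c⁻¹ • φ₂) - c⁻¹ • φ₂ * φ₁ = 1 := by
    rw [mul_smul_comm, smul_mul_assoc, ← smul_sub, hcomm, Algebra.smul_def, ← map_mul,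
      inv_mul_cancel₀ hc, map_one]
  exact ⟨galoisMap B τ hτ, galoisMap_tmul hτ,
    galoisMap_bijective hτ hsup hone hVV hτB hτV hφ₁ (V.smul_mem _ hφ₂) hcomm'⟩

/-- For a `ℤ/2`-graded `K`-algebra `A = B ⊕ V` with parity involution `τ`
and odd elements `φ₁, φ₂ ∈ V` with `φ₁φ₂ - φ₂φ₁ = c·1` for a nonzero scalar `c`, the
extension `B ⊆ A` is `O(ℤ/2)`-Hopf-Galois: the canonical Galois map
`β : A ⊗_B A → A × A`, `a ⊗ a' ↦ (a·a', a·τ(a'))`, is bijective. -/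
theorem stmt_12 (K A : Type) [Field K] [CharZero K] [Ring A] [Algebra K A]
    (B V : Submodule K A) (hcompl : IsCompl B V) (hone : (1 : A) ∈ B)
    (hBB : ∀ b ∈ B, ∀ b' ∈ B, b * b' ∈ B) (hBV : ∀ b ∈ B, ∀ v ∈ V, b * v ∈ V)
    (hVB : ∀ v ∈ V, ∀ b ∈ B, v * b ∈ V) (hVV : ∀ v ∈ V, ∀ v' ∈ V, v * v' ∈ B)
    (τ : A →ₗ[K] A) (hτB : ∀ b ∈ B, τ b = b) (hτV : ∀ v ∈ V, τ v = -v)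
    (φ₁ φ₂ : A) (hφ₁ : φ₁ ∈ V) (hφ₂ : φ₂ ∈ V) (c : K) (hc : c ≠ 0)
    (hcomm : φ₁ * φ₂ - φ₂ * φ₁ = algebraMap K A c) :
    ∃ β : grTensorA K A B →ₗ[K] A × A,
      (∀ a a' : A, β (Submodule.Quotient.mk (a ⊗ₜ[K] a')) = (a * a', a * τ a')) ∧
      Function.Bijective β :=
  stmt_12_general K A B V hcompl hone hBB hBV hVV τ hτB hτV φ₁ φ₂ hφ₁ hφ₂ c hc hcomm
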